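/- Let Φ be an irreducible root system with base {α₁,…,αₙ} and highest short root β, and let u be a vector in the fundamental Weyl cell, i.e., (u, αᵢ) ≥ 0 for all i and β*(u) ≤ 1 where β*(x) = 2(x,β)/(β,β). Then for every positive root α ∈ Φ⁺ one has 0 ≤ α*(u) ≤ 1, where α*(x) = 2(x,α)/(α,α). -/

import Mathlib

open scoped BigOperators

/-- The coroot pairing `α*(x) = 2(x,α)/(α,α)`. -/
noncomputable def coPair {V : Type*} [NormedAddCommGroup V] [InnerProductSpace ℝ V]
    (a x : V) : ℝ :=
  2 * (inner ℝ x a : ℝ) / (inner ℝ a a : ℝ)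

/-- `v` is a sum of the vectors `Δ i` with nonnegative integer coefficients. -/
def IsNNComb {V : Type*} [AddCommGroup V] [Module ℝ V] {n : ℕ}
    (Δ : Fin n → V) (v : V) : Prop :=
  ∃ c : Fin n → ℕ, v = ∑ i, (c i : ℝ) • Δ i

/-- A crystallographic, irreducible root system `Φ` with base (simple roots) `Δ`. -/
structure IsIrreducibleRootSystem {V : Type*} [NormedAddCommGroup V] [InnerProductSpace ℝ V]
    {n : ℕ} (Φ : Finset V) (Δ : Fin n → V) : Prop where
  zero_not_mem : (0 : V) ∉ Φ
  base_mem : ∀ i, Δ i ∈ Φ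
  crystallographic : ∀ a ∈ Φ, ∀ b ∈ Φ, ∃ k : ℤ, coPair a b = (k : ℝ)
  reflect_mem : ∀ a ∈ Φ, ∀ b ∈ Φ, b - coPair a b • a ∈ Φ
  base_expansion : ∀ a ∈ Φ, ∃ c : Fin n → ℤ,
    ((∀ i, 0 ≤ c i) ∨ (∀ i, c i ≤ 0)) ∧ a = ∑ i, (c i : ℝ) • Δ i
  irreducible : ∀ S ⊆ Φ, S.Nonempty →
    (∀ a ∈ S, ∀ b ∈ Φ, b ∉ S → (inner ℝ a b : ℝ) = 0) → S = Φ

/-- A positive root: a root which is a nonnegative integral combination of simple roots. -/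
def IsPositiveRoot {V : Type*} [NormedAddCommGroup V] [InnerProductSpace ℝ V] {n : ℕ}
    (Φ : Finset V) (Δ : Fin n → V) (a : V) : Prop :=
  a ∈ Φ ∧ IsNNComb Δ a

/-- `β` is the maximal (highest) short root of `Φ` w.r.t. the base `Δ`. -/
def IsMaximalShortRoot {V : Type*} [NormedAddCommGroup V] [InnerProductSpace ℝ V] {n : ℕ}
    (Φ : Finset V) (Δ : Fin n → V) (β : V) : Prop :=
  β ∈ Φ ∧ (∀ a ∈ Φ, ‖β‖ ≤ ‖a‖) ∧ ∀ a ∈ Φ, ‖a‖ = ‖β‖ → IsNNComb Δ (β - a)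

/-- `γ` is the maximal (highest) long root of `Φ` w.r.t. the base `Δ`. -/
def IsMaximalLongRoot {V : Type*} [NormedAddCommGroup V] [InnerProductSpace ℝ V] {n : ℕ}
    (Φ : Finset V) (Δ : Fin n → V) (γ : V) : Prop :=
  γ ∈ Φ ∧ (∀ a ∈ Φ, ‖a‖ ≤ ‖γ‖) ∧ ∀ a ∈ Φ, ‖a‖ = ‖γ‖ → IsNNComb Δ (γ - a)

/-- `ω` is the family of fundamental dominant weights dual to the simple coroots of `Δ`. -/
def IsFundamentalWeights {V : Type*} [NormedAddCommGroup V] [InnerProductSpace ℝ V] {n : ℕ}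
    (Δ : Fin n → V) (ω : Fin n → V) : Prop :=
  ∀ i j, coPair (Δ j) (ω i) = if i = j then 1 else 0

/-!
Roots of the same length as `β` (short roots) pair with `u` at most `(u, β)`, because
`β - σ` is a nonnegative combination of simple roots and `u` is dominant. A long root `α` has,
by irreducibility, a short root `σ` with `(α, σ) > 0`; the Cartan integer `⟨σ, α∨⟩` is then `1`,
so `α - σ` is again a short root and `‖α‖² ≥ 2‖β‖²`. Splitting `α = σ + (α - σ)` gives
`2(u, α) ≤ 4(u, β) ≤ 2(β, β) ≤ (α, α)`.
-/

open scoped RealInnerProductSpace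

section

variable {V : Type*} [NormedAddCommGroup V] [InnerProductSpace ℝ V] {n : ℕ}

lemma coPair_nonneg {a x : V} (h : 0 ≤ ⟪x, a⟫) : 0 ≤ coPair a x :=
  div_nonneg (mul_nonneg zero_le_two h) real_inner_self_nonneg

lemma coPair_le_one_iff {a x : V} (ha : 0 < ⟪a, a⟫) :
    coPair a x ≤ 1 ↔ 2 * ⟪x, a⟫ ≤ ⟪a, a⟫ :=
  div_le_one ha

lemma IsNNComb.inner_nonneg {Δ : Fin n → V} {u v : V} (hdom : ∀ i, 0 ≤ ⟪u, Δ i⟫)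
    (hv : IsNNComb Δ v) : 0 ≤ ⟪u, v⟫ := by
  obtain ⟨c, rfl⟩ := hv
  rw [inner_sum]
  exact Finset.sum_nonneg fun i _ => by
    rw [real_inner_smul_right]
    exact mul_nonneg (Nat.cast_nonneg _) (hdom i)

lemma IsMaximalShortRoot.inner_le_of_norm_eq {Φ : Finset V} {Δ : Fin n → V} {β σ u : V}
    (hβ : IsMaximalShortRoot Φ Δ β) (hdom : ∀ i, 0 ≤ ⟪u, Δ i⟫) (hσ : σ ∈ Φ)
    (hσβ : ‖σ‖ = ‖β‖) : ⟪u, σ⟫ ≤ ⟪u, β⟫ := by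
  have h := (hβ.2.2 σ hσ hσβ).inner_nonneg hdom
  rw [inner_sub_right] at h
  linarith

namespace IsIrreducibleRootSystem

variable {Φ : Finset V} {Δ : Fin n → V} (hΦ : IsIrreducibleRootSystem Φ Δ)
include hΦ

lemma inner_self_pos {a : V} (ha : a ∈ Φ) : 0 < ⟪a, a⟫ :=
  real_inner_self_pos.2 fun h => hΦ.zero_not_mem (h ▸ ha)

lemma neg_mem {a : V} (ha : a ∈ Φ) : -a ∈ Φ := by
  have h := hΦ.reflect_mem a ha a ha
  rwa [coPair, mul_div_assoc, div_self (hΦ.inner_self_pos ha).ne', mul_one, two_smul,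
    sub_add_cancel_left] at h

section LongShort

variable {a σ : V} (ha : a ∈ Φ) (hσ : σ ∈ Φ) (hlt : ‖σ‖ < ‖a‖) (hpos : 0 < ⟪a, σ⟫)
include ha hσ hlt hpos

lemma coPair_eq_one_of_norm_lt : coPair a σ = 1 := by
  obtain ⟨k, hk⟩ := hΦ.crystallographic a ha σ hσ
  have haa := hΦ.inner_self_pos ha
  have hk_pos : (0 : ℝ) < k := hk ▸ div_pos (by rw [real_inner_comm]; linarith) haa
  -- Cauchy–Schwarz with `‖σ‖ < ‖a‖` bounds the Cartan integer strictly by `2`.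
  have hk_lt : (k : ℝ) < 2 := by
    rw [← hk, coPair, div_lt_iff₀ haa, real_inner_comm, real_inner_self_eq_norm_mul_norm]
    nlinarith [real_inner_le_norm a σ, norm_nonneg σ]
  have hk_one : k = 1 := by
    have h₀ : 0 < k := by exact_mod_cast hk_pos
    have h₂ : k < 2 := by exact_mod_cast hk_lt
    omega
  rw [hk, hk_one, Int.cast_one]

lemma two_mul_inner_eq_of_norm_lt : 2 * ⟪a, σ⟫ = ⟪a, a⟫ := by
  have h := hΦ.coPair_eq_one_of_norm_lt ha hσ hlt hpos
  rwa [coPair, div_eq_one_iff_eq (hΦ.inner_self_pos ha).ne', real_inner_comm] at h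

lemma sub_mem_of_norm_lt : a - σ ∈ Φ := by
  have h := hΦ.reflect_mem a ha σ hσ
  rw [hΦ.coPair_eq_one_of_norm_lt ha hσ hlt hpos, one_smul] at h
  simpa only [neg_sub] using hΦ.neg_mem h

lemma norm_sub_eq_of_norm_lt : ‖a - σ‖ = ‖σ‖ := by
  have h := hΦ.two_mul_inner_eq_of_norm_lt ha hσ hlt hpos
  have : ‖a - σ‖ ^ 2 = ‖σ‖ ^ 2 := by
    rw [← real_inner_self_eq_norm_sq, ← real_inner_self_eq_norm_sq, inner_sub_sub_self,
      real_inner_comm a σ]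
    linarith
  exact (sq_eq_sq₀ (norm_nonneg _) (norm_nonneg _)).1 this

lemma two_mul_inner_self_le_of_norm_lt : 2 * ⟪σ, σ⟫ ≤ ⟪a, a⟫ := by
  obtain ⟨k, hk⟩ := hΦ.crystallographic σ hσ a ha
  have hσσ := hΦ.inner_self_pos hσ
  have hk_eq : (k : ℝ) * ⟪σ, σ⟫ = ⟪a, a⟫ := by
    rw [← hk, coPair, div_mul_cancel₀ _ hσσ.ne', hΦ.two_mul_inner_eq_of_norm_lt ha hσ hlt hpos]
  have hσa : ⟪σ, σ⟫ < ⟪a, a⟫ := by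
    rw [real_inner_self_eq_norm_mul_norm, real_inner_self_eq_norm_mul_norm]
    exact mul_self_lt_mul_self (norm_nonneg σ) hlt
  have hk_gt : (1 : ℝ) < k := (lt_mul_iff_one_lt_left hσσ).1 (hk_eq ▸ hσa)
  have hk_two : (2 : ℝ) ≤ k := by
    have : (1 : ℤ) < k := by exact_mod_cast hk_gt
    exact_mod_cast this
  calc 2 * ⟪σ, σ⟫ ≤ k * ⟪σ, σ⟫ := mul_le_mul_of_nonneg_right hk_two hσσ.le
    _ = ⟪a, a⟫ := hk_eq

end LongShort

lemma exists_inner_pos_of_forall_norm_le {β a : V} (hβ : β ∈ Φ) (hmin : ∀ b ∈ Φ, ‖β‖ ≤ ‖b‖)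
    (ha : a ∈ Φ) : ∃ σ ∈ Φ, ‖σ‖ = ‖β‖ ∧ 0 < ⟪a, σ⟫ := by
  classical
  set S := Φ.filter fun b => ∃ σ ∈ Φ, ‖σ‖ = ‖β‖ ∧ 0 < ⟪b, σ⟫
  have hβS : β ∈ S := Finset.mem_filter.2 ⟨hβ, β, hβ, rfl, hΦ.inner_self_pos hβ⟩
  suffices hS : S = Φ by rw [← hS] at ha; exact (Finset.mem_filter.1 ha).2
  refine hΦ.irreducible S (Finset.filter_subset _ _) ⟨β, hβS⟩ fun b hbS c hc hcS => ?_
  have hc_perp : ∀ σ ∈ Φ, ‖σ‖ = ‖β‖ → ⟪σ, c⟫ = 0 := by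
    intro σ hσ hσβ
    have hle : ∀ τ ∈ Φ, ‖τ‖ = ‖β‖ → ⟪c, τ⟫ ≤ 0 := fun τ hτ hτβ =>
      not_lt.1 fun h => hcS (Finset.mem_filter.2 ⟨hc, τ, hτ, hτβ, h⟩)
    have h₁ := hle σ hσ hσβ
    have h₂ := hle (-σ) (hΦ.neg_mem hσ) (by rwa [norm_neg])
    rw [inner_neg_right] at h₂
    rw [real_inner_comm]
    linarith
  obtain ⟨hb, σ, hσ, hσβ, hpos⟩ := Finset.mem_filter.1 hbS
  rcases (hmin b hb).eq_or_lt with hbβ | hlt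
  · exact hc_perp b hb hbβ.symm
  · have hlt' : ‖σ‖ < ‖b‖ := hσβ ▸ hlt
    have hsplit : b = σ + (b - σ) := (add_sub_cancel σ b).symm
    rw [hsplit, inner_add_left, hc_perp σ hσ hσβ,
      hc_perp _ (hΦ.sub_mem_of_norm_lt hb hσ hlt' hpos)
        ((hΦ.norm_sub_eq_of_norm_lt hb hσ hlt' hpos).trans hσβ), add_zero]

end IsIrreducibleRootSystem

end

/-- If `u` lies in the fundamental Weyl cell, i.e. `(u, αᵢ) ≥ 0` for every
simple root and `β*(u) ≤ 1` for the maximal short root `β`, then `0 ≤ α*(u) ≤ 1` for every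
positive root `α`. -/
theorem coPair_mem_unit_interval_of_mem_cell
    {V : Type*} [NormedAddCommGroup V] [InnerProductSpace ℝ V] {n : ℕ}
    (Φ : Finset V) (Δ : Fin n → V) (hΦ : IsIrreducibleRootSystem Φ Δ)
    (β : V) (hβ : IsMaximalShortRoot Φ Δ β)
    (u : V) (hdom : ∀ i, 0 ≤ (inner ℝ u (Δ i) : ℝ)) (hcell : coPair β u ≤ 1) :
    ∀ a : V, IsPositiveRoot Φ Δ a → 0 ≤ coPair a u ∧ coPair a u ≤ 1 := by
  rintro a ⟨ha, ha_comb⟩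
  have hβu : 2 * ⟪u, β⟫ ≤ ⟪β, β⟫ := (coPair_le_one_iff (hΦ.inner_self_pos hβ.1)).1 hcell
  refine ⟨coPair_nonneg (ha_comb.inner_nonneg hdom),
    (coPair_le_one_iff (hΦ.inner_self_pos ha)).2 ?_⟩
  rcases (hβ.2.1 a ha).eq_or_lt with haβ | hlt
  · have h₁ := hβ.inner_le_of_norm_eq hdom ha haβ.symm
    have h₂ : ⟪β, β⟫ = ⟪a, a⟫ := by simp only [real_inner_self_eq_norm_sq, haβ]
    linarith
  · obtain ⟨σ, hσ, hσβ, hpos⟩ := hΦ.exists_inner_pos_of_forall_norm_le hβ.1 hβ.2.1 ha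
    have hlt' : ‖σ‖ < ‖a‖ := hσβ ▸ hlt
    have h₁ := hβ.inner_le_of_norm_eq hdom hσ hσβ
    have h₂ := hβ.inner_le_of_norm_eq hdom (hΦ.sub_mem_of_norm_lt ha hσ hlt' hpos)
      ((hΦ.norm_sub_eq_of_norm_lt ha hσ hlt' hpos).trans hσβ)
    have h₃ := hΦ.two_mul_inner_self_le_of_norm_lt ha hσ hlt' hpos
    have h₄ : ⟪σ, σ⟫ = ⟪β, β⟫ := by simp only [real_inner_self_eq_norm_sq, hσβ]
    calc 2 * ⟪u, a⟫ = 2 * ⟪u, σ⟫ + 2 * ⟪u, a - σ⟫ := by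
          rw [inner_sub_right]; ring
      _ ≤ 2 * ⟪β, β⟫ := by linarith
      _ ≤ ⟪a, a⟫ := h₄ ▸ h₃
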